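/- There exist matroids $M_1 = (E, \mathcal{B}_1)$ and $M_2 = (E, \mathcal{B}_2)$ such that the pair $(M_1, M_2)$ satisfies the Reconfigurability of Common Bases property (RCB), while the pair $(2M_1, 2M_2)$ of their 2-fold matroid unions does not satisfy (RCB). -/

import Mathlib

/-- Reconfigurability of Common Bases for a pair of matroids. -/
def RCB {E : Type*} (M₁ M₂ : Matroid E) : Prop :=
  ∀ B B' : Set E, M₁.IsBase B → M₂.IsBase B → M₁.IsBase B' → M₂.IsBase B' →
    ∃ (n : ℕ) (seq : Fin (n + 1) → Set E), seq 0 = B ∧ seq (Fin.last n) = B' ∧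
      (∀ i, M₁.IsBase (seq i) ∧ M₂.IsBase (seq i)) ∧
      ∀ i : Fin n, (seq i.castSucc \ seq i.succ).ncard = 1 ∧
        (seq i.succ \ seq i.castSucc).ncard = 1

/-!
The common bases of `M₁` and `M₂` form a connected exchange graph: each of them other than
`{a, b, c₂}` is one exchange away from a common base sharing more elements with `{a, b, c₂}`.
Every base of `2M₁` consists of `a`, `b`, two `cᵢ` and two `dⱼ`, and every base of `2M₂` meets
`{a, c₁, d₁}` in two elements, so the common bases of `2M₁` and `2M₂` are the complements of
`{c₁, dⱼ}` and of `{cᵢ, d₁}` with `i, j ≠ 1`. Passing from one kind to the other changes two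
elements, so whether `c₁` lies in a common base is invariant under single exchanges.
The exchange conditions on these finite base families are decided by evaluation.
-/

open Finset Relation

theorem Relation.reflTransGen_of_exists_measure_lt {β : Type*} {r : β → β → Prop} {p : β → Prop}
    (f : β → ℕ) {x₀ : β} (h : ∀ x, p x → x ≠ x₀ → ∃ y, p y ∧ r x y ∧ f y < f x) {x : β}
    (hx : p x) : ReflTransGen r x x₀ := by
  induction x using (measure f).wf.induction with
  | _ x ih =>
    by_cases hx₀ : x = x₀
    · exact hx₀ ▸ .refl
    · obtain ⟨y, hy, hxy, hfy⟩ := h x hx hx₀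
      exact .head hxy (ih y hfy hy)

/-- The bases of the two-fold union `2M` when `𝓑` is the family of bases of `M`. -/
def twoFoldUnion {α : Type*} [DecidableEq α] (𝓑 : Finset (Finset α)) : Finset (Finset α) :=
  ((𝓑 ×ˢ 𝓑).filter fun p ↦ Disjoint p.1 p.2).image fun p ↦ p.1 ∪ p.2

namespace Matroid

variable {α : Type*}

section ofFinsetBases

variable [DecidableEq α] {𝓑 : Finset (Finset α)}

theorem exchangeProperty_coe_mem
    (h : ∀ B ∈ 𝓑, ∀ B' ∈ 𝓑, ∀ e ∈ B \ B', ∃ f ∈ B' \ B, insert f (B.erase e) ∈ 𝓑) :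
    ExchangeProperty fun X : Set α ↦ ∃ B ∈ 𝓑, ↑B = X := by
  rintro _ _ ⟨B, hB, rfl⟩ ⟨B', hB', rfl⟩ e he
  rw [← coe_sdiff, mem_coe] at he
  obtain ⟨f, hf, hmem⟩ := h B hB B' hB' e he
  exact ⟨f, by rwa [← coe_sdiff, mem_coe], _, hmem, by simp⟩

/-- The ground set is `univ`: elements outside every member of `𝓑` are loops. -/
def ofFinsetBases (𝓑 : Finset (Finset α)) (hne : 𝓑.Nonempty)
    (hex : ∀ B ∈ 𝓑, ∀ B' ∈ 𝓑, ∀ e ∈ B \ B', ∃ f ∈ B' \ B, insert f (B.erase e) ∈ 𝓑) :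
    Matroid α :=
  Matroid.ofExistsFiniteIsBase Set.univ (fun X ↦ ∃ B ∈ 𝓑, ↑B = X)
    (hne.elim fun B hB ↦ ⟨B, ⟨B, hB, rfl⟩, B.finite_toSet⟩) (exchangeProperty_coe_mem hex)
    fun _ _ ↦ Set.subset_univ _

@[simp]
theorem isBase_ofFinsetBases_iff {hne hex} {X : Set α} :
    (ofFinsetBases 𝓑 hne hex).IsBase X ↔ ∃ B ∈ 𝓑, ↑B = X :=
  Iff.rfl

end ofFinsetBases

section twoFoldUnion

variable [DecidableEq α] {𝓑 : Finset (Finset α)}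

theorem mem_twoFoldUnion {X : Finset α} :
    X ∈ twoFoldUnion 𝓑 ↔ ∃ B₁ ∈ 𝓑, ∃ B₂ ∈ 𝓑, Disjoint B₁ B₂ ∧ B₁ ∪ B₂ = X := by
  simp [twoFoldUnion, and_assoc]

theorem isBase_ofFinsetBases_twoFoldUnion_iff {hne hex hne₂ hex₂} {X : Set α} :
    (ofFinsetBases (twoFoldUnion 𝓑) hne₂ hex₂).IsBase X ↔
      ∃ B₁ B₂ : Set α, (ofFinsetBases 𝓑 hne hex).IsBase B₁ ∧
        (ofFinsetBases 𝓑 hne hex).IsBase B₂ ∧ Disjoint B₁ B₂ ∧ X = B₁ ∪ B₂ := by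
  simp only [isBase_ofFinsetBases_iff, mem_twoFoldUnion]
  constructor
  · rintro ⟨_, ⟨B₁, hB₁, B₂, hB₂, hdisj, rfl⟩, rfl⟩
    exact ⟨B₁, B₂, ⟨B₁, hB₁, rfl⟩, ⟨B₂, hB₂, rfl⟩, disjoint_coe.2 hdisj, coe_union B₁ B₂⟩
  · rintro ⟨_, _, ⟨B₁, hB₁, rfl⟩, ⟨B₂, hB₂, rfl⟩, hdisj, rfl⟩
    exact ⟨B₁ ∪ B₂, ⟨B₁, hB₁, B₂, hB₂, disjoint_coe.1 hdisj, rfl⟩, coe_union B₁ B₂⟩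

end twoFoldUnion

section commonBases

variable {M₁ M₂ : Matroid α}

def IsCommonBase (M₁ M₂ : Matroid α) (B : Set α) : Prop :=
  M₁.IsBase B ∧ M₂.IsBase B

def CommonBaseExchange (M₁ M₂ : Matroid α) (B B' : Set α) : Prop :=
  IsCommonBase M₁ M₂ B ∧ IsCommonBase M₁ M₂ B' ∧ (B \ B').ncard = 1 ∧ (B' \ B).ncard = 1

instance : Std.Symm (CommonBaseExchange M₁ M₂) where
  symm _ _ h := ⟨h.2.1, h.1, h.2.2.2, h.2.2.1⟩

theorem exists_seq_of_reflTransGen {B B' : Set α} (hB : IsCommonBase M₁ M₂ B)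
    (h : ReflTransGen (CommonBaseExchange M₁ M₂) B B') :
    ∃ (n : ℕ) (seq : Fin (n + 1) → Set α), seq 0 = B ∧ seq (Fin.last n) = B' ∧
      (∀ i, M₁.IsBase (seq i) ∧ M₂.IsBase (seq i)) ∧
      ∀ i : Fin n, (seq i.castSucc \ seq i.succ).ncard = 1 ∧
        (seq i.succ \ seq i.castSucc).ncard = 1 := by
  induction h using ReflTransGen.head_induction_on with
  | refl => exact ⟨0, fun _ ↦ B', rfl, rfl, fun _ ↦ hB, finZeroElim⟩
  | head hstep _ ih =>
    obtain ⟨n, seq, h0, hlast, hbase, hseq⟩ := ih hstep.2.1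
    refine ⟨n + 1, Fin.cons _ seq, rfl, by rwa [← Fin.succ_last, Fin.cons_succ],
      Fin.cases hstep.1 hbase, Fin.cases ?_ fun i ↦ ?_⟩
    · simpa [← h0] using hstep.2.2
    · simpa using hseq i

theorem rcb_of_reflTransGen {H : Set α}
    (h : ∀ B, IsCommonBase M₁ M₂ B → ReflTransGen (CommonBaseExchange M₁ M₂) B H) :
    RCB M₁ M₂ := fun B B' h₁ h₂ h₁' h₂' ↦
  exists_seq_of_reflTransGen ⟨h₁, h₂⟩ ((h B ⟨h₁, h₂⟩).trans (symm (h B' ⟨h₁', h₂'⟩)))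

theorem not_rcb_of_invariant (p : Set α → Prop)
    (hp : ∀ B B', CommonBaseExchange M₁ M₂ B B' → p B → p B') {B B' : Set α}
    (hB : IsCommonBase M₁ M₂ B) (hB' : IsCommonBase M₁ M₂ B') (hpB : p B) (hpB' : ¬p B') :
    ¬RCB M₁ M₂ := by
  intro hrcb
  obtain ⟨n, seq, h0, hlast, hbase, hseq⟩ := hrcb B B' hB.1 hB.2 hB'.1 hB'.2
  have hp_seq : ∀ i, p (seq i) :=
    Fin.induction (h0 ▸ hpB) fun i hi ↦ hp _ _ ⟨hbase _, hbase _, hseq i⟩ hi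
  exact hpB' (hlast ▸ hp_seq _)

end commonBases

section commonBasesOfFinsetBases

variable [DecidableEq α] {𝓑₁ 𝓑₂ : Finset (Finset α)} {hne₁ hex₁ hne₂ hex₂}

local notation "M₁" => ofFinsetBases 𝓑₁ hne₁ hex₁
local notation "M₂" => ofFinsetBases 𝓑₂ hne₂ hex₂

theorem isCommonBase_ofFinsetBases_iff {X : Set α} :
    IsCommonBase M₁ M₂ X ↔ ∃ B ∈ 𝓑₁ ∩ 𝓑₂, ↑B = X := by
  simp only [IsCommonBase, isBase_ofFinsetBases_iff, mem_inter]
  constructor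
  · rintro ⟨⟨B, hB₁, rfl⟩, B', hB₂, hB'⟩
    exact ⟨B, ⟨hB₁, coe_injective hB' ▸ hB₂⟩, rfl⟩
  · rintro ⟨B, ⟨hB₁, hB₂⟩, rfl⟩
    exact ⟨⟨B, hB₁, rfl⟩, B, hB₂, rfl⟩

theorem isCommonBase_ofFinsetBases_coe_iff {B : Finset α} :
    IsCommonBase M₁ M₂ ↑B ↔ B ∈ 𝓑₁ ∩ 𝓑₂ := by
  simp [isCommonBase_ofFinsetBases_iff]

theorem commonBaseExchange_ofFinsetBases_coe_iff {B B' : Finset α} :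
    CommonBaseExchange M₁ M₂ ↑B ↑B' ↔
      B ∈ 𝓑₁ ∩ 𝓑₂ ∧ B' ∈ 𝓑₁ ∩ 𝓑₂ ∧ #(B \ B') = 1 ∧ #(B' \ B) = 1 := by
  simp only [CommonBaseExchange, isCommonBase_ofFinsetBases_coe_iff, ← coe_sdiff,
    Set.ncard_coe_finset]

theorem rcb_ofFinsetBases (H : Finset α)
    (h : ∀ B ∈ 𝓑₁ ∩ 𝓑₂, B ≠ H → ∃ B' ∈ 𝓑₁ ∩ 𝓑₂,
      #(B \ B') = 1 ∧ #(B' \ B) = 1 ∧ #(B' \ H) < #(B \ H)) :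
    RCB M₁ M₂ := by
  refine rcb_of_reflTransGen (H := ↑H) fun _ hX ↦ reflTransGen_of_exists_measure_lt
    (fun X ↦ (X \ ↑H).ncard) (fun _ hX hXH ↦ ?_) hX
  obtain ⟨B, hB, rfl⟩ := isCommonBase_ofFinsetBases_iff.1 hX
  obtain ⟨B', hB', hBB', hB'B, hlt⟩ := h B hB (ne_of_apply_ne _ hXH)
  refine ⟨B', isCommonBase_ofFinsetBases_coe_iff.2 hB',
    commonBaseExchange_ofFinsetBases_coe_iff.2 ⟨hB, hB', hBB', hB'B⟩, ?_⟩
  simpa only [← coe_sdiff, Set.ncard_coe_finset] using hlt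

theorem not_rcb_ofFinsetBases (e : α)
    (he : ∀ B ∈ 𝓑₁ ∩ 𝓑₂, ∀ B' ∈ 𝓑₁ ∩ 𝓑₂, #(B \ B') = 1 → e ∈ B → e ∈ B')
    {B B' : Finset α} (hB : B ∈ 𝓑₁ ∩ 𝓑₂) (hB' : B' ∈ 𝓑₁ ∩ 𝓑₂) (heB : e ∈ B) (heB' : e ∉ B') :
    ¬RCB M₁ M₂ := by
  refine not_rcb_of_invariant (e ∈ ·) (fun X Y hXY ↦ ?_)
    (isCommonBase_ofFinsetBases_coe_iff.2 hB) (isCommonBase_ofFinsetBases_coe_iff.2 hB')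
    (mem_coe.2 heB) (mt mem_coe.1 heB')
  obtain ⟨C, -, rfl⟩ := isCommonBase_ofFinsetBases_iff.1 hXY.1
  obtain ⟨C', -, rfl⟩ := isCommonBase_ofFinsetBases_iff.1 hXY.2.1
  obtain ⟨hC, hC', hCC', -⟩ := commonBaseExchange_ofFinsetBases_coe_iff.1 hXY
  simpa using he C hC C' hC' hCC'

end commonBasesOfFinsetBases

end Matroid

namespace RCBCounterexample

open Matroid

/- The ground set `{a, b, c₁, c₂, c₃, d₁, d₂, d₃}` is `Fin 8`, with `a = 0`, `b = 1`, `cᵢ = i + 1`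
and `dᵢ = i + 4`. -/

def C : Finset (Fin 8) := {2, 3, 4}

def D : Finset (Fin 8) := {5, 6, 7}

def bases₁ : Finset (Finset (Fin 8)) :=
  (univ.powersetCard 3).filter fun B ↦ #(B ∩ C) ≤ 1 ∧ #(B ∩ D) ≤ 1

def bases₂ : Finset (Finset (Fin 8)) :=
  (univ.powersetCard 3).filter fun B ↦ #(B ∩ {0, 2, 5}) = 1

def M₁ : Matroid (Fin 8) := ofFinsetBases bases₁ (by decide) (by decide +kernel)

def M₂ : Matroid (Fin 8) := ofFinsetBases bases₂ (by decide) (by decide +kernel)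

def N₁ : Matroid (Fin 8) :=
  ofFinsetBases (twoFoldUnion bases₁) (by decide +kernel) (by decide +kernel)

def N₂ : Matroid (Fin 8) :=
  ofFinsetBases (twoFoldUnion bases₂) (by decide +kernel) (by decide +kernel)

theorem rcb_M₁_M₂ : RCB M₁ M₂ :=
  rcb_ofFinsetBases {0, 1, 3} (by decide +kernel)

theorem not_rcb_N₁_N₂ : ¬RCB N₁ N₂ :=
  not_rcb_ofFinsetBases 2 (by decide +kernel) (B := {0, 1, 2, 4, 6, 7}) (B' := {0, 1, 3, 4, 5, 7})
    (by decide +kernel) (by decide +kernel) (by decide) (by decide)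

end RCBCounterexample

theorem stmt_15 :
    ∃ (E : Type) (M₁ M₂ N₁ N₂ : Matroid E),
      RCB M₁ M₂ ∧
      (∀ B : Set E, N₁.IsBase B ↔
        ∃ B₁ B₂ : Set E, M₁.IsBase B₁ ∧ M₁.IsBase B₂ ∧ Disjoint B₁ B₂ ∧ B = B₁ ∪ B₂) ∧
      (∀ B : Set E, N₂.IsBase B ↔
        ∃ B₁ B₂ : Set E, M₂.IsBase B₁ ∧ M₂.IsBase B₂ ∧ Disjoint B₁ B₂ ∧ B = B₁ ∪ B₂) ∧
      ¬ RCB N₁ N₂ :=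
  ⟨Fin 8, RCBCounterexample.M₁, RCBCounterexample.M₂, RCBCounterexample.N₁,
    RCBCounterexample.N₂, RCBCounterexample.rcb_M₁_M₂,
    fun _ ↦ Matroid.isBase_ofFinsetBases_twoFoldUnion_iff, fun _ ↦ Matroid.isBase_ofFinsetBases_twoFoldUnion_iff,
    RCBCounterexample.not_rcb_N₁_N₂⟩
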